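/- Let Θ be a proper convex function, {x_n} ⊂ D(∂Θ) with ξ_n ∈ ∂Θ(x_n), and x̂ ∈ D(Θ). Suppose the sequence D_{ξ_n}Θ(x̂, x_n) is nonincreasing and there is a constant c₀ > 0 such that |⟨ξ_m − ξ_l, x_m − x̂⟩| ≤ c₀(D_{ξ_l}Θ(x̂, x_l) − D_{ξ_m}Θ(x̂, x_m)) for all l < m. Then D_{ξ_l}Θ(x_m, x_l) ≤ (1 + c₀)(D_{ξ_l}Θ(x̂, x_l) − D_{ξ_m}Θ(x̂, x_m)) for all l < m; in particular D_{ξ_l}Θ(x_m, x_l) → 0 as l, m → ∞. -/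

import Mathlib

/-!
Writing `D n = D_{ξ n}Θ(x̂, x n)`, the three-point identity
`D_{ξ l}Θ(x m, x l) = D l - D m + ⟨ξ m - ξ l, x m - x̂⟩` together with the hypothesis on the
cross term gives the estimate. The sequence `D` is nonincreasing and nonnegative (the `ξ n` are
subgradients), hence convergent, so `D l - D m → 0` as `l, m → ∞`.
-/

open Filter Topology Set

def bregmanDist {X : Type*} [NormedAddCommGroup X] [NormedSpace ℝ X]
    (Θ : X → ℝ) (ξ : StrongDual ℝ X) (y x : X) : ℝ :=
  Θ y - Θ x - ξ (y - x)

section Bregman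

variable {X : Type*} [NormedAddCommGroup X] [NormedSpace ℝ X] {Θ : X → ℝ}

lemma bregmanDist_nonneg {ξ : StrongDual ℝ X} {x : X} (hξ : ∀ z, Θ x + ξ (z - x) ≤ Θ z)
    (y : X) : 0 ≤ bregmanDist Θ ξ y x := by
  have := hξ y
  unfold bregmanDist
  linarith

lemma bregmanDist_three_point (ξ ζ : StrongDual ℝ X) (x y z : X) :
    bregmanDist Θ ξ y x = bregmanDist Θ ξ z x - bregmanDist Θ ζ z y + (ζ - ξ) (y - z) := by
  simp only [bregmanDist, sub_apply, map_sub]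
  ring

end Bregman

lemma Antitone.tendsto_sub_atTop_prod {ι : Type*} [SemilatticeSup ι] [Nonempty ι] {D : ι → ℝ}
    (hD : Antitone D) (hbdd : BddBelow (range D)) :
    Tendsto (fun p : ι × ι => D p.1 - D p.2) atTop (𝓝 0) := by
  have hlim := tendsto_atTop_ciInf hD hbdd
  rw [← prod_atTop_atTop_eq, ← sub_self (⨅ i, D i)]
  exact (hlim.comp tendsto_fst).sub (hlim.comp tendsto_snd)

theorem bregman_cauchy_estimate_general {X : Type*} [NormedAddCommGroup X] [NormedSpace ℝ X]
    (Θ : X → ℝ) (x : ℕ → X) (ξ : ℕ → StrongDual ℝ X)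
    (hsub : ∀ n, ∀ z, Θ (x n) + ξ n (z - x n) ≤ Θ z)
    (xhat : X) (c₀ : ℝ)
    (D : ℕ → ℝ) (hD : ∀ n, D n = Θ xhat - Θ (x n) - ξ n (xhat - x n))
    (hmono : ∀ n, D (n + 1) ≤ D n)
    (hkey : ∀ l m, l < m → |ξ m (x m - xhat) - ξ l (x m - xhat)| ≤ c₀ * (D l - D m)) :
    (∀ l m, l < m →
      Θ (x m) - Θ (x l) - ξ l (x m - x l) ≤ (1 + c₀) * (D l - D m)) ∧
    (∀ ε > 0, ∃ N, ∀ l m, N ≤ l → l < m →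
      Θ (x m) - Θ (x l) - ξ l (x m - x l) < ε) := by
  have hDn : ∀ n, bregmanDist Θ (ξ n) xhat (x n) = D n := fun n => (hD n).symm
  have hest : ∀ l m, l < m → bregmanDist Θ (ξ l) (x m) (x l) ≤ (1 + c₀) * (D l - D m) := by
    intro l m hlm
    have hcross := (abs_le.mp (hkey l m hlm)).2
    rw [bregmanDist_three_point (ξ l) (ξ m) (x l) (x m) xhat, hDn, hDn, sub_apply]
    linarith
  refine ⟨hest, fun ε hε => ?_⟩
  have hbdd : BddBelow (range D) :=
    ⟨0, by rintro _ ⟨n, rfl⟩; exact hDn n ▸ bregmanDist_nonneg (hsub n) xhat⟩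
  have hlim := ((antitone_nat_of_succ_le hmono).tendsto_sub_atTop_prod hbdd).const_mul (1 + c₀)
  rw [mul_zero] at hlim
  obtain ⟨N, hN⟩ := eventually_atTop_prod_self.mp (hlim.eventually (gt_mem_nhds hε))
  exact ⟨N, fun l m hNl hlm => (hest l m hlm).trans_lt (hN l m hNl (hNl.trans hlm.le))⟩

/-- Cauchy-type Bregman-distance estimate for the iterates. -/
theorem bregman_cauchy_estimate {X : Type*} [NormedAddCommGroup X] [NormedSpace ℝ X]
    (Θ : X → ℝ) (x : ℕ → X) (ξ : ℕ → StrongDual ℝ X)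
    (hsub : ∀ n, ∀ z, Θ (x n) + ξ n (z - x n) ≤ Θ z)
    (xhat : X) (c₀ : ℝ) (hc₀ : 0 < c₀)
    (D : ℕ → ℝ) (hD : ∀ n, D n = Θ xhat - Θ (x n) - ξ n (xhat - x n))
    (hmono : ∀ n, D (n + 1) ≤ D n)
    (hkey : ∀ l m, l < m → |ξ m (x m - xhat) - ξ l (x m - xhat)| ≤ c₀ * (D l - D m)) :
    (∀ l m, l < m →
      Θ (x m) - Θ (x l) - ξ l (x m - x l) ≤ (1 + c₀) * (D l - D m)) ∧
    (∀ ε > 0, ∃ N, ∀ l m, N ≤ l → l < m →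
      Θ (x m) - Θ (x l) - ξ l (x m - x l) < ε) :=
  bregman_cauchy_estimate_general Θ x ξ hsub xhat c₀ D hD hmono hkey
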